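/- arXiv:2506.07625 — 2 statements merged into one kernel-verified Lean document; each statement's English description precedes it below -/
import Mathlib

section
/- Let x₀ ∈ (0,1) and define xₙ = xₙ₋₁·(1 − xₙ₋₁) for n ≥ 1. Then the limit limₙ→∞ n²·(xₙ − 1/n + (log n)/n²) exists as a real number. -/
/-!
With `y n = (x n)⁻¹` the recursion reads `y (n + 1) = y n + 1 + (y n - 1)⁻¹`, so `y n > n + 1`,
and comparing the correction terms with the harmonic series gives `y n ≤ n + C + log n`.
Hence `a n = y n - n - log n` has increments `(y n - 1)⁻¹ - log (1 + 1 / n) = O(log n / n²)`,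
which are summable, so `a n → l`. Finally
`n² x n - n + log n = (-a n + (log n)² / n + (log n / n) a n) * (n / y n) → -l`.
-/

open Filter Real Topology

lemma mul_one_sub_mem_Ioo {t : ℝ} (ht : t ∈ Set.Ioo 0 1) : t * (1 - t) ∈ Set.Ioo 0 1 := by
  obtain ⟨h0, h1⟩ := ht
  exact ⟨mul_pos h0 (sub_pos.2 h1), by nlinarith⟩

lemma inv_mul_one_sub {t : ℝ} (h0 : t ≠ 0) (h1 : t ≠ 1) :
    (t * (1 - t))⁻¹ = t⁻¹ + 1 + (t⁻¹ - 1)⁻¹ := by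
  rw [show t⁻¹ - 1 = (1 - t) / t by field_simp]
  field_simp
  ring

lemma inv_add_one_le_log_add_one_sub_log {a : ℝ} (ha : 0 < a) :
    (a + 1)⁻¹ ≤ log (a + 1) - log a := by
  have h := one_sub_inv_le_log_of_pos (div_pos (add_pos ha one_pos) ha)
  rw [log_div (by positivity) ha.ne', inv_div] at h
  calc (a + 1)⁻¹ = 1 - a / (a + 1) := by field_simp; ring
    _ ≤ _ := h

lemma log_add_one_sub_log_le_inv {a : ℝ} (ha : 0 < a) : log (a + 1) - log a ≤ a⁻¹ := by
  have h := log_le_sub_one_of_pos (div_pos (add_pos ha one_pos) ha)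
  rw [log_div (by positivity) ha.ne'] at h
  calc _ ≤ (a + 1) / a - 1 := h
    _ = a⁻¹ := by field_simp; ring

lemma summable_log_div_sq : Summable fun n : ℕ => log n / (n : ℝ) ^ 2 := by
  refine .of_nonneg_of_le (fun n => by positivity) (fun n => ?_)
    ((summable_nat_rpow.2 (by norm_num : (-3 / 2 : ℝ) < -1)).mul_left 2)
  rcases n.eq_zero_or_pos with rfl | hn
  · simp
  have hn : (0 : ℝ) < n := by exact_mod_cast hn
  calc log n / (n : ℝ) ^ 2 ≤ (n : ℝ) ^ (1 / 2 : ℝ) / (1 / 2) / (n : ℝ) ^ 2 := by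
        gcongr; exact log_natCast_le_rpow_div n (by norm_num)
    _ = 2 * (n : ℝ) ^ (-3 / 2 : ℝ) := by
        rw [show (-3 / 2 : ℝ) = 1 / 2 - 2 by norm_num, rpow_sub hn, rpow_two]; ring

lemma summable_const_add_log_div_sq (K : ℝ) :
    Summable fun n : ℕ => (K + log n) / (n : ℝ) ^ 2 := by
  simp_rw [add_div, div_eq_mul_one_div K]
  exact (summable_one_div_nat_pow.2 one_lt_two).mul_left K |>.add summable_log_div_sq

lemma exists_tendsto_of_dist_succ_le {α : Type*} [PseudoMetricSpace α] [CompleteSpace α]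
    {a : ℕ → α} {g : ℕ → ℝ} (hg : Summable g) (h : ∀ᶠ n in atTop, dist (a n) (a (n + 1)) ≤ g n) :
    ∃ l, Tendsto a atTop (𝓝 l) :=
  cauchySeq_tendsto_of_complete <| cauchySeq_of_summable_dist <|
    hg.of_norm_bounded_eventually_nat <| h.mono fun n hn => by rwa [norm_of_nonneg dist_nonneg]

namespace InvLogistic

variable {y : ℕ → ℝ} (hy0 : 1 < y 0) (hy : ∀ n, y (n + 1) = y n + 1 + (y n - 1)⁻¹)
include hy0 hy

lemma lt_sub_one (n : ℕ) : (n : ℝ) < y n - 1 := by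
  induction n with
  | zero => simpa using hy0
  | succ n ih =>
    have : 0 < (y n - 1)⁻¹ := inv_pos.2 (by linarith [n.cast_nonneg (α := ℝ)])
    rw [hy]; push_cast; linarith

omit hy0 in
lemma eq_add_sum (n : ℕ) : y n = y 0 + n + ∑ k ∈ Finset.range n, (y k - 1)⁻¹ := by
  induction n with
  | zero => simp
  | succ n ih => rw [hy, Finset.sum_range_succ]; push_cast; linarith

lemma le_add_log (n : ℕ) : y n ≤ n + (y 0 + (y 0 - 1)⁻¹ + 1) + log n := by
  have hc : 0 < (y 0 - 1)⁻¹ := inv_pos.2 (by linarith)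
  cases n with
  | zero => simp only [Nat.cast_zero, log_zero]; linarith
  | succ n =>
    have hsum : ∑ k ∈ Finset.range n, (y (k + 1) - 1)⁻¹ ≤ harmonic n := by
      simp only [harmonic, Rat.cast_sum, Rat.cast_inv, Rat.cast_natCast]
      push_cast
      exact Finset.sum_le_sum fun k _ =>
        inv_anti₀ (by positivity) (by exact_mod_cast (lt_sub_one hy0 hy (k + 1)).le)
    have hlog : log n ≤ log (n + 1 : ℕ) := by
      rcases n.eq_zero_or_pos with rfl | hn
      · simp
      · exact log_le_log (by exact_mod_cast hn) (by simp)
    rw [eq_add_sum hy, Finset.sum_range_succ']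
    linarith [harmonic_le_one_add_log n]

lemma abs_inv_sub_one_sub_log_le {n : ℕ} (hn₀ : 0 < n) :
    |(y n - 1)⁻¹ - (log (n + 1) - log n)| ≤ (y 0 + (y 0 - 1)⁻¹ + 1 + log n) / (n : ℝ) ^ 2 := by
  have hn : (0 : ℝ) < n := by exact_mod_cast hn₀
  have hlt := lt_sub_one hy0 hy n
  have hle := le_add_log hy0 hy n
  have hc : 0 < (y 0 - 1)⁻¹ := inv_pos.2 (by linarith)
  have hlog : 0 ≤ log n := log_nonneg (Nat.one_le_cast.2 hn₀)
  rw [abs_le]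
  constructor
  · calc -((y 0 + (y 0 - 1)⁻¹ + 1 + log n) / (n : ℝ) ^ 2) ≤ -((y n - 1 - n) / (n * n)) := by
          rw [neg_le_neg_iff, sq]; gcongr; linarith
      _ ≤ -((y n - 1 - n) / (n * (y n - 1))) := by
          rw [neg_le_neg_iff]; gcongr
      _ = (y n - 1)⁻¹ - (n : ℝ)⁻¹ := by field_simp [(by linarith : y n - 1 ≠ 0)]; ring
      _ ≤ _ := by linarith [log_add_one_sub_log_le_inv hn]
  · calc (y n - 1)⁻¹ - (log (n + 1) - log n) ≤ (n : ℝ)⁻¹ - ((n : ℝ) + 1)⁻¹ := by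
          gcongr; exact inv_add_one_le_log_add_one_sub_log hn
      _ = 1 / (n * (n + 1)) := by field_simp; ring
      _ ≤ 1 / (n : ℝ) ^ 2 := by rw [sq]; gcongr; linarith
      _ ≤ _ := by gcongr; linarith

lemma exists_tendsto_sub_sub_log : ∃ l, Tendsto (fun n : ℕ => y n - n - log n) atTop (𝓝 l) := by
  refine exists_tendsto_of_dist_succ_le (summable_const_add_log_div_sq (y 0 + (y 0 - 1)⁻¹ + 1)) ?_
  filter_upwards [eventually_gt_atTop 0] with n hn
  rw [dist_comm, dist_eq]
  convert abs_inv_sub_one_sub_log_le hy0 hy hn using 2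
  rw [hy]; push_cast; ring

end InvLogistic

lemma tendsto_log_pow_div_natCast (k : ℕ) :
    Tendsto (fun n : ℕ => log n ^ k / n) atTop (𝓝 0) := by
  simpa [Function.comp_def] using
    (tendsto_pow_log_div_mul_add_atTop 1 0 k one_ne_zero).comp tendsto_natCast_atTop_atTop

lemma tendsto_sq_div_sub_add_log {y : ℕ → ℝ} {l : ℝ}
    (h : Tendsto (fun n : ℕ => y n - n - log n) atTop (𝓝 l)) :
    Tendsto (fun n : ℕ => (n : ℝ) ^ 2 / y n - n + log n) atTop (𝓝 (-l)) := by
  have hlog := tendsto_log_pow_div_natCast 1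
  simp only [pow_one] at hlog
  have hdiv : Tendsto (fun n : ℕ => y n / n) atTop (𝓝 1) := by
    have := (tendsto_const_nhds (x := (1 : ℝ))).add
      (hlog.add (h.div_atTop tendsto_natCast_atTop_atTop))
    rw [add_zero, add_zero] at this
    refine this.congr' ?_
    filter_upwards [eventually_gt_atTop 0] with n hn
    field_simp
    ring
  have hratio : Tendsto (fun n : ℕ => (n : ℝ) / y n) atTop (𝓝 1) := by
    simpa only [inv_div, inv_one] using hdiv.inv₀ one_ne_zero
  have hmain := ((h.neg.add (tendsto_log_pow_div_natCast 2)).add (hlog.mul h)).mul hratio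
  rw [zero_mul, add_zero, add_zero, mul_one] at hmain
  refine hmain.congr' ?_
  filter_upwards [eventually_gt_atTop 0, hdiv.eventually (lt_mem_nhds one_pos)] with n hn hpos
  have hyn : y n ≠ 0 := by rintro h0; simp [h0] at hpos
  field_simp
  ring

/-- For the logistic recursion `x (n+1) = x n * (1 - x n)` with `x 0 ∈ (0,1)`, the limit
`lim n² (x n - 1/n + (log n)/n²)` exists as a real number. -/
theorem logistic_iterates_refined_limit (x : ℕ → ℝ)
    (hx0 : x 0 ∈ Set.Ioo (0 : ℝ) 1)
    (hrec : ∀ n : ℕ, x (n + 1) = x n * (1 - x n)) :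
    ∃ L : ℝ, Tendsto
      (fun n : ℕ => (n : ℝ) ^ 2 * (x n - 1 / n + Real.log n / (n : ℝ) ^ 2))
      atTop (nhds L) := by
  have hx (n : ℕ) : x n ∈ Set.Ioo 0 1 := by
    induction n with
    | zero => exact hx0
    | succ n ih => exact hrec n ▸ mul_one_sub_mem_Ioo ih
  have hy (n : ℕ) : (x (n + 1))⁻¹ = (x n)⁻¹ + 1 + ((x n)⁻¹ - 1)⁻¹ := by
    rw [hrec]; exact inv_mul_one_sub (hx n).1.ne' (hx n).2.ne
  obtain ⟨l, hl⟩ := InvLogistic.exists_tendsto_sub_sub_log (y := fun n => (x n)⁻¹)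
    ((one_lt_inv₀ hx0.1).2 hx0.2) hy
  refine ⟨-l, (tendsto_sq_div_sub_add_log hl).congr' ?_⟩
  filter_upwards [eventually_gt_atTop 0] with n hn
  field_simp
end

section
/- Let y₀ > 0 and define yₙ = yₙ₋₁/(1 + yₙ₋₁²) for n ≥ 1. Then the limit limₙ→∞ 2n^{3/2}·(√2·yₙ − n^{−1/2} + (1/8)·(log n)/n^{3/2}) exists as a real number. -/
/-!
With `u = y⁻²` the recursion becomes `u (n + 1) = u n + 2 + 1 / u n`, so
`u n = u 0 + 2 n + ∑_{k<n} 1 / u k`. Since `u k ≥ c (k + 1)` and `u k - 2 (k + 1) = O(log k)`,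
the terms `1 / u k - 1 / (2 (k + 1))` are `O(log k / k²)`, hence summable, and the convergence
of `harmonic n - log n` gives `u n - 2 n - (log n) / 2 → L`.
Writing `x = (u n - 2 n) / (2 n) = O(log n / n)` we have `√2 √n y n = (1 + x)^{-1/2}`, and the
second-order Taylor bound `|(1 + x)^{-1/2} - (1 - x / 2)| ≤ x²` turns the expression into
`-(u n - 2 n - (log n) / 2) / 2 + O((log n)² / n)`, which tends to `-L / 2`.
-/

open Filter Topology Finset Asymptotics Real

lemma sum_range_inv_mul_succ (c : ℝ) (n : ℕ) :
    ∑ k ∈ range n, (c * (k + 1))⁻¹ = c⁻¹ * harmonic n := by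
  rw [harmonic, Rat.cast_sum, mul_sum]
  refine sum_congr rfl fun k _ => ?_
  push_cast
  rw [mul_inv]

section AddInvRecursion

variable {u : ℕ → ℝ} {a : ℝ}

lemma pos_of_succ_eq_add_inv (ha : 0 ≤ a) (hu0 : 0 < u 0)
    (hu : ∀ n, u (n + 1) = u n + a + (u n)⁻¹) (n : ℕ) : 0 < u n := by
  induction n with
  | zero => exact hu0
  | succ n ih => rw [hu]; positivity

lemma eq_add_mul_add_sum_inv (hu : ∀ n, u (n + 1) = u n + a + (u n)⁻¹) (n : ℕ) :
    u n = u 0 + a * n + ∑ k ∈ range n, (u k)⁻¹ := by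
  induction n with
  | zero => simp
  | succ n ih => rw [hu, sum_range_succ, ih]; push_cast; ring

lemma le_sub_mul_of_succ_eq_add_inv (ha : 0 ≤ a) (hu0 : 0 < u 0)
    (hu : ∀ n, u (n + 1) = u n + a + (u n)⁻¹) (n : ℕ) : u 0 ≤ u n - a * n := by
  have hsum : 0 ≤ ∑ k ∈ range n, (u k)⁻¹ :=
    sum_nonneg fun k _ => (inv_pos.mpr (pos_of_succ_eq_add_inv ha hu0 hu k)).le
  linarith [eq_add_mul_add_sum_inv hu n]

lemma min_mul_succ_le (ha : 0 ≤ a) (hu0 : 0 < u 0)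
    (hu : ∀ n, u (n + 1) = u n + a + (u n)⁻¹) (n : ℕ) :
    min (u 0) a * (n + 1) ≤ u n := by
  have := mul_le_mul_of_nonneg_right (min_le_right (u 0) a) (Nat.cast_nonneg (α := ℝ) n)
  linarith [min_le_left (u 0) a, le_sub_mul_of_succ_eq_add_inv ha hu0 hu n]

lemma sum_inv_le_one_add_log (ha : 0 < a) (hu0 : 0 < u 0)
    (hu : ∀ n, u (n + 1) = u n + a + (u n)⁻¹) (n : ℕ) :
    ∑ k ∈ range n, (u k)⁻¹ ≤ (1 + log n) / min (u 0) a := by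
  have hm : 0 < min (u 0) a := lt_min hu0 ha
  calc ∑ k ∈ range n, (u k)⁻¹ ≤ ∑ k ∈ range n, (min (u 0) a * (k + 1))⁻¹ := by
        gcongr with k
        exact min_mul_succ_le ha.le hu0 hu k
    _ = harmonic n / min (u 0) a := by rw [sum_range_inv_mul_succ, inv_mul_eq_div]
    _ ≤ (1 + log n) / min (u 0) a := by gcongr; exact harmonic_le_one_add_log n

lemma abs_mul_succ_sub_le (ha : 0 < a) (hu0 : 0 < u 0)
    (hu : ∀ n, u (n + 1) = u n + a + (u n)⁻¹) (k : ℕ) :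
    |a * (k + 1) - u k| ≤ (a + u 0 + 3 / min (u 0) a) * ((k : ℝ) + 1) ^ (1 / 2 : ℝ) := by
  have hm : 0 < min (u 0) a := lt_min hu0 ha
  have hsum : 0 ≤ ∑ j ∈ range k, (u j)⁻¹ :=
    sum_nonneg fun j _ => (inv_pos.mpr (pos_of_succ_eq_add_inv ha.le hu0 hu j)).le
  have hone : 1 ≤ ((k : ℝ) + 1) ^ (1 / 2 : ℝ) :=
    Real.one_le_rpow (by linarith [(k.cast_nonneg : (0 : ℝ) ≤ k)]) (by norm_num)
  have hlog : 1 + log k ≤ 3 * ((k : ℝ) + 1) ^ (1 / 2 : ℝ) := by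
    have := Real.log_le_rpow_div k.cast_nonneg (show (0 : ℝ) < 1 / 2 by norm_num)
    have := Real.rpow_le_rpow k.cast_nonneg (le_add_of_nonneg_right zero_le_one)
      (show (0 : ℝ) ≤ 1 / 2 by norm_num)
    linarith
  have hS := (sum_inv_le_one_add_log ha hu0 hu k).trans
    (div_le_div_of_nonneg_right hlog hm.le)
  rw [mul_div_right_comm] at hS
  rw [eq_add_mul_add_sum_inv hu k, abs_le]
  constructor <;> nlinarith

lemma summable_inv_sub_inv_mul_succ (ha : 0 < a) (hu0 : 0 < u 0)
    (hu : ∀ n, u (n + 1) = u n + a + (u n)⁻¹) :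
    Summable fun k : ℕ => (u k)⁻¹ - (a * (k + 1))⁻¹ := by
  set m := min (u 0) a
  have hm : 0 < m := lt_min hu0 ha
  set C := a + u 0 + 3 / m
  refine Summable.of_norm_bounded
    (g := fun k : ℕ => C / (a * m) * ((k + 1 : ℕ) : ℝ) ^ (-(3 : ℝ) / 2)) ?_ fun k => ?_
  · exact ((summable_nat_add_iff 1).mpr (Real.summable_nat_rpow.mpr (by norm_num))).mul_left _
  have hk : (0 : ℝ) < k + 1 := by positivity
  have huk := pos_of_succ_eq_add_inv ha.le hu0 hu k
  rw [Real.norm_eq_abs, inv_sub_inv huk.ne' (by positivity), abs_div,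
    abs_of_pos (a := u k * (a * (k + 1))) (by positivity)]
  push_cast
  rw [show -(3 : ℝ) / 2 = 1 / 2 - 2 by norm_num, Real.rpow_sub hk, Real.rpow_two]
  calc |a * (k + 1) - u k| / (u k * (a * (k + 1)))
      ≤ C * ((k : ℝ) + 1) ^ (1 / 2 : ℝ) / (m * (k + 1) * (a * (k + 1))) := by
        gcongr
        · exact abs_mul_succ_sub_le ha hu0 hu k
        · exact min_mul_succ_le ha.le hu0 hu k
    _ = C / (a * m) * (((k : ℝ) + 1) ^ (1 / 2 : ℝ) / ((k : ℝ) + 1) ^ 2) := by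
        field_simp

theorem tendsto_sub_mul_sub_inv_mul_log (ha : 0 < a) (hu0 : 0 < u 0)
    (hu : ∀ n, u (n + 1) = u n + a + (u n)⁻¹) :
    ∃ L, Tendsto (fun n : ℕ => u n - a * n - a⁻¹ * log n) atTop (𝓝 L) := by
  obtain ⟨T, hT⟩ := summable_inv_sub_inv_mul_succ ha hu0 hu
  refine ⟨u 0 + T + a⁻¹ * eulerMascheroniConstant, ?_⟩
  have hsplit : ∀ n : ℕ, u n - a * n - a⁻¹ * log n = u 0
      + ∑ k ∈ range n, ((u k)⁻¹ - (a * (k + 1))⁻¹) + a⁻¹ * (harmonic n - log n) := by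
    intro n
    rw [eq_add_mul_add_sum_inv hu n, sum_sub_distrib, sum_range_inv_mul_succ]
    ring
  simp only [hsplit]
  exact (tendsto_const_nhds.add hT.tendsto_sum_nat).add (tendsto_harmonic_sub_log.const_mul _)

end AddInvRecursion

lemma isLittleO_sq_of_tendsto_sub_mul_log {v : ℕ → ℝ} {c L : ℝ}
    (h : Tendsto (fun n => v n - c * log n) atTop (𝓝 L)) :
    (fun n => v n ^ 2) =o[atTop] (fun n : ℕ => (n : ℝ)) := by
  have hbdd : (fun n => v n - c * log n) =o[atTop] (fun n : ℕ => log n) :=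
    (h.isBigO_one ℝ).trans_isLittleO
      (isLittleO_const_log_atTop.comp_tendsto tendsto_natCast_atTop_atTop)
  have hv : v =O[atTop] (fun n : ℕ => log n) := by
    simpa using hbdd.isBigO.add ((isBigO_refl (fun n : ℕ => log n) atTop).const_mul_left c)
  exact (hv.pow 2).trans_isLittleO
    (isLittleO_pow_log_id_atTop.comp_tendsto tendsto_natCast_atTop_atTop)

lemma abs_inv_sqrt_one_add_sub_le {x : ℝ} (hx : 0 ≤ x) :
    |(√(1 + x))⁻¹ - (1 - x / 2)| ≤ x ^ 2 := by
  set s := √(1 + x)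
  have hs : 1 ≤ s := Real.one_le_sqrt.mpr (by linarith)
  have hxs : x = s ^ 2 - 1 := by rw [Real.sq_sqrt (by linarith)]; ring
  have hrem : s⁻¹ - (1 - x / 2) = (s - 1) ^ 2 * (s + 2) / (2 * s) := by
    rw [hxs]; field_simp; ring
  rw [hrem, abs_of_nonneg (by positivity), div_le_iff₀ (by positivity), hxs]
  nlinarith [mul_le_mul_of_nonneg_left (show s + 2 ≤ 2 * s * (s + 1) ^ 2 by nlinarith)
    (sq_nonneg (s - 1))]

lemma tendsto_mul_inv_sqrt_one_add_sub {v : ℕ → ℝ} (hv0 : ∀ n, 0 ≤ v n)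
    (hv : (fun n => v n ^ 2) =o[atTop] (fun n : ℕ => (n : ℝ))) :
    Tendsto (fun n : ℕ => 2 * n * ((√(1 + v n / (2 * n)))⁻¹ - (1 - v n / (2 * n) / 2)))
      atTop (𝓝 0) := by
  refine squeeze_zero_norm' ?_ (by simpa using hv.tendsto_div_nhds_zero.div_const 2)
  filter_upwards [eventually_gt_atTop 0] with n hn
  have hn' : (0 : ℝ) < n := by exact_mod_cast hn
  calc ‖2 * n * ((√(1 + v n / (2 * n)))⁻¹ - (1 - v n / (2 * n) / 2))‖
      ≤ 2 * n * (v n / (2 * n)) ^ 2 := by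
        rw [norm_mul, Real.norm_of_nonneg (by positivity)]
        gcongr
        exact abs_inv_sqrt_one_add_sub_le (by have := hv0 n; positivity)
    _ = v n ^ 2 / n / 2 := by field_simp

lemma two_mul_rpow_three_halves_mul_eq {t y : ℝ} (ht : 0 < t) (hy : 0 < y) :
    2 * t ^ ((3 : ℝ) / 2) * (√2 * y - t ^ (-(1 : ℝ) / 2) + 1 / 8 * log t / t ^ ((3 : ℝ) / 2))
      = 2 * t * ((√(1 + ((y ^ 2)⁻¹ - 2 * t) / (2 * t)))⁻¹
          - (1 - ((y ^ 2)⁻¹ - 2 * t) / (2 * t) / 2))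
        - ((y ^ 2)⁻¹ - 2 * t - 2⁻¹ * log t) / 2 := by
  have h2 : √2 ^ 2 = 2 := Real.sq_sqrt (by norm_num)
  have hts : √t ^ 2 = t := Real.sq_sqrt ht.le
  have hsqrt : √(1 + ((y ^ 2)⁻¹ - 2 * t) / (2 * t)) = (√2 * √t * y)⁻¹ := by
    rw [← Real.sqrt_sq (show 0 ≤ (√2 * √t * y)⁻¹ by positivity)]
    congr 1
    field_simp
    rw [h2, hts]; ring
  have h32 : t ^ ((3 : ℝ) / 2) = t * √t := by
    rw [show (3 : ℝ) / 2 = 1 + 1 / 2 by norm_num, Real.rpow_add ht, Real.rpow_one,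
      Real.sqrt_eq_rpow]
  have h12 : t ^ (-(1 : ℝ) / 2) = (√t)⁻¹ := by
    rw [show -(1 : ℝ) / 2 = -(1 / 2) by norm_num, Real.rpow_neg ht.le, Real.sqrt_eq_rpow]
  rw [hsqrt, inv_inv, h32, h12]
  field_simp
  ring

/-- For the recursion `y (n+1) = y n / (1 + (y n)²)` with `y 0 > 0`, the limit
`lim 2 n^{3/2} (√2 y n - n^{-1/2} + (1/8) (log n) / n^{3/2})` exists. -/
theorem rational_map_iterates_refined_limit (y : ℕ → ℝ)
    (hy0 : y 0 > 0)
    (hrec : ∀ n : ℕ, y (n + 1) = y n / (1 + y n ^ 2)) :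
    ∃ L : ℝ, Tendsto
      (fun n : ℕ => 2 * (n : ℝ) ^ ((3 : ℝ) / 2) *
        (Real.sqrt 2 * y n - (n : ℝ) ^ (-(1 : ℝ) / 2) +
          (1 / 8) * Real.log n / (n : ℝ) ^ ((3 : ℝ) / 2)))
      atTop (nhds L) := by
  have hy (n : ℕ) : 0 < y n := by
    induction n with
    | zero => exact hy0
    | succ n ih => rw [hrec]; positivity
  set u : ℕ → ℝ := fun n => (y n ^ 2)⁻¹ with hu_def
  have hu (n : ℕ) : u (n + 1) = u n + 2 + (u n)⁻¹ := by
    have := hy n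
    simp only [hu_def, hrec n]
    field_simp
    ring
  have hu0 : 0 < u 0 := by positivity
  obtain ⟨L, hL⟩ := tendsto_sub_mul_sub_inv_mul_log two_pos hu0 hu
  have hrem := tendsto_mul_inv_sqrt_one_add_sub (v := fun n => u n - 2 * n)
    (fun n => hu0.le.trans (le_sub_mul_of_succ_eq_add_inv zero_le_two hu0 hu n))
    (isLittleO_sq_of_tendsto_sub_mul_log hL)
  refine ⟨0 - L / 2, (hrem.sub (hL.div_const 2)).congr' ?_⟩
  filter_upwards [eventually_gt_atTop 0] with n hn
  exact (two_mul_rpow_three_halves_mul_eq (Nat.cast_pos.mpr hn) (hy n)).symm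
end
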